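/- Let H ∈ (0,1), r ≥ 1 an integer with H < 1 - 1/(2r), and let ρ(k) = (|k+1|^{2H} + |k-1|^{2H} - 2|k|^{2H})/2. Then there is a constant C = C(H,r) such that for all integers n ≥ 1 and reals t ≥ 0, 2^{-nrH} ∑_{k,l=0}^{⌊2^{n/2}t⌋-1} |ρ(k-l)|^r ≤ C t 2^{n(1/2 - rH)}. -/

import Mathlib

open Set

lemma second_diff_bound (p : ℝ) (hp0 : 0 < p) (hp2 : p ≤ 2) (x : ℝ) (hx : 2 ≤ x) :
    |(x+1)^p + (x-1)^p - 2 * x^p| ≤ p * |p-1| * (x-1)^(p-2) := by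
  have hx1 : (1:ℝ) ≤ x - 1 := by linarith
  set g : ℝ → ℝ := fun y => (y+1)^p - y^p with hg
  set g' : ℝ → ℝ := fun y => p*(y+1)^(p-1) - p*y^(p-1) with hg'
  have hder : ∀ y : ℝ, 0 < y → HasDerivAt g (g' y) y := by
    intro y hy
    have h1 : HasDerivAt (fun y : ℝ => (y+1)^p) (p*(y+1)^(p-1)) y := by
      have := HasDerivAt.rpow_const (p := p) ((hasDerivAt_id y).add_const 1)
        (Or.inl (by positivity : y + 1 ≠ 0))
      simpa using this
    have h2 : HasDerivAt (fun y : ℝ => y^p) (p*y^(p-1)) y := by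
      simpa using Real.hasDerivAt_rpow_const (p := p) (Or.inl hy.ne')
    exact h1.sub h2
  have hderh : ∀ y : ℝ, y ≠ 0 → HasDerivAt (fun y : ℝ => y^(p-1)) ((p-1)*y^(p-2)) y := by
    intro y hy0
    have := Real.hasDerivAt_rpow_const (x := y) (p := p-1) (Or.inl hy0)
    rwa [show p-1-1 = p-2 by ring] at this
  have hab : x - 1 < x := by linarith
  obtain ⟨ξ, hξ, hξ'⟩ := exists_hasDerivAt_eq_slope g g' hab
    (fun y hy => (hder y (by have := hy.1; linarith)).continuousAt.continuousWithinAt)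
    (fun y hy => hder y (by have := hy.1; linarith))
  have hξpos : 0 < ξ := by have := hξ.1; linarith
  obtain ⟨η, hη, hη'⟩ := exists_hasDerivAt_eq_slope (fun y : ℝ => y^(p-1))
    (fun y => (p-1)*y^(p-2)) (by linarith : ξ < ξ + 1)
    (fun y hy => (hderh y (by have := hy.1; intro h; subst h; linarith)).continuousAt.continuousWithinAt)
    (fun y hy => hderh y (by have := hy.1; intro h; subst h; linarith))
  have hslope : g x - g (x-1) = (x+1)^p + (x-1)^p - 2 * x^p := by
    simp only [hg]; ring_nf
  have heq1 : (x+1)^p + (x-1)^p - 2 * x^p = g' ξ := by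
    rw [← hslope, hξ']; field_simp; ring
  have heq2 : g' ξ = p * ((p-1) * η^(p-2)) := by
    have h3 : (ξ+1)^(p-1) - ξ^(p-1) = (p-1) * η^(p-2) := by
      have := hη'; field_simp at this; linarith [this]
    simp only [hg']
    rw [← h3]; ring
  rw [heq1, heq2]
  have hη1 : x - 1 ≤ η := by have := hη.1; have := hξ.1; linarith
  have hmono : η^(p-2) ≤ (x-1)^(p-2) :=
    Real.rpow_le_rpow_of_nonpos (by linarith) hη1 (by linarith)
  have hηnn : (0:ℝ) ≤ η^(p-2) := Real.rpow_nonneg (by nlinarith) _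
  rw [abs_mul, abs_mul, abs_of_nonneg hp0.le, abs_of_nonneg hηnn]
  have : p * (|p-1| * η^(p-2)) ≤ p * (|p-1| * (x-1)^(p-2)) := by
    apply mul_le_mul_of_nonneg_left _ hp0.le
    exact mul_le_mul_of_nonneg_left hmono (abs_nonneg _)
  linarith [this]

/-- The correlation function of fractional Brownian increments. -/
noncomputable def rho (H : ℝ) (k : ℤ) : ℝ :=
  (|(k : ℝ) + 1| ^ (2*H) + |(k : ℝ) - 1| ^ (2*H) - 2 * |(k : ℝ)| ^ (2*H)) / 2

lemma rho_neg (H : ℝ) (k : ℤ) : rho H (-k) = rho H k := by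
  unfold rho
  push_cast
  rw [show -(k:ℝ) + 1 = -((k:ℝ) - 1) by ring, show -(k:ℝ) - 1 = -((k:ℝ)+1) by ring,
    abs_neg, abs_neg, abs_neg]
  ring

lemma rho_natAbs (H : ℝ) (k : ℤ) : rho H (k.natAbs : ℤ) = rho H k := by
  rcases Int.natAbs_eq k with h | h
  · rw [← h]
  · rw [h, rho_neg]; simp

lemma rho_bound (H : ℝ) (hH0 : 0 < H) (hH1 : H < 1) (m : ℕ) (hm : 2 ≤ m) :
    |rho H (m : ℤ)| ≤ H * |2*H-1| * ((m:ℝ)-1)^(2*H-2) := by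
  have hx : (2:ℝ) ≤ (m:ℝ) := by exact_mod_cast hm
  have key := second_diff_bound (2*H) (by linarith) (by linarith) (m:ℝ) hx
  unfold rho
  rw [show |(((m:ℤ)):ℝ) + 1| = (m:ℝ) + 1 by push_cast; rw [abs_of_nonneg]; linarith,
    show |(((m:ℤ)):ℝ) - 1| = (m:ℝ) - 1 by push_cast; rw [abs_of_nonneg]; linarith,
    show |(((m:ℤ)):ℝ)| = (m:ℝ) by push_cast; rw [abs_of_nonneg]; linarith]
  rw [abs_div, abs_of_nonneg (by norm_num : (0:ℝ) ≤ 2), div_le_iff₀ (by norm_num : (0:ℝ) < 2)]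
  calc |((m:ℝ)+1)^(2*H) + ((m:ℝ)-1)^(2*H) - 2*(m:ℝ)^(2*H)|
      ≤ 2*H * |2*H-1| * ((m:ℝ)-1)^(2*H-2) := key
    _ = H * |2*H-1| * ((m:ℝ)-1)^(2*H-2) * 2 := by ring
theorem stmt_9 (H : ℝ) (hH0 : 0 < H) (hH1 : H < 1) (r : ℕ) (hr : 1 ≤ r)
    (hHr : H < 1 - 1/(2*r)) :
    ∃ C : ℝ, ∀ n : ℕ, 1 ≤ n → ∀ t : ℝ, 0 ≤ t →
      (2:ℝ) ^ (-(n:ℝ)*r*H) *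
        ∑ k ∈ Finset.range ⌊(2:ℝ) ^ ((n:ℝ)/2) * t⌋₊,
          ∑ l ∈ Finset.range ⌊(2:ℝ) ^ ((n:ℝ)/2) * t⌋₊, |rho H ((k:ℤ) - l)| ^ r
      ≤ C * t * (2:ℝ) ^ ((n:ℝ) * (1/2 - r*H)) := by
  have hr0 : (0:ℝ) < r := by exact_mod_cast hr
  set α : ℝ := (2*H-2)*r with hαdef
  have hα : α < -1 := by
    have h1 : (1/(2*(r:ℝ)))*(2*r) = 1 := by field_simp
    nlinarith [mul_lt_mul_of_pos_right hHr (by positivity : (0:ℝ) < 2*r)]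
  have hsum : Summable (fun j : ℕ => ((j:ℝ)+1) ^ α) := by
    have h := (summable_nat_add_iff 1).mpr (Real.summable_nat_rpow.mpr hα)
    simpa using h
  set c : ℝ := (H*|2*H-1|) ^ r with hcdef
  have hc : 0 ≤ c := by positivity
  set T : ℝ := ∑' j : ℕ, ((j:ℝ)+1) ^ α with hT
  have hTnn : 0 ≤ T := tsum_nonneg fun j => Real.rpow_nonneg (by positivity) _
  set F : ℕ → ℝ := fun m => |rho H (m:ℤ)| ^ r with hFdef
  have hFnn : ∀ m, 0 ≤ F m := fun m => pow_nonneg (abs_nonneg _) r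
  set B : ℝ := F 0 + F 1 + c * T with hB
  have hBnn : 0 ≤ B := by
    have := hFnn 0; have := hFnn 1; positivity
  -- partial sums of F are bounded by B
  have hPart : ∀ N : ℕ, ∑ m ∈ Finset.range N, F m ≤ B := by
    intro N
    rcases le_or_gt N 2 with h | h
    · calc ∑ m ∈ Finset.range N, F m ≤ ∑ m ∈ Finset.range 2, F m :=
            Finset.sum_le_sum_of_subset_of_nonneg (Finset.range_subset_range.mpr h)
              (fun i _ _ => hFnn i)
        _ = F 0 + F 1 := by simp [Finset.sum_range_succ]
        _ ≤ B := by rw [hB]; nlinarith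
    · have hsplit : ∑ m ∈ Finset.range N, F m
          = (F 0 + F 1) + ∑ m ∈ Finset.Ico 2 N, F m := by
        rw [Finset.range_eq_Ico, ← Finset.sum_Ico_consecutive _ (by omega : 0 ≤ 2) h.le]
        congr 1
        simp [Finset.sum_Ico_eq_sum_range, Finset.sum_range_succ]
      rw [hsplit]
      have htail : ∑ m ∈ Finset.Ico 2 N, F m ≤ c * T := by
        have hstep : ∀ m ∈ Finset.Ico 2 N, F m ≤ c * ((m:ℝ)-1) ^ α := by
          intro m hm
          have hm2 : 2 ≤ m := (Finset.mem_Ico.mp hm).1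
          have hb := rho_bound H hH0 hH1 m hm2
          have hm1 : (0:ℝ) ≤ (m:ℝ) - 1 := by
            have : (2:ℝ) ≤ (m:ℝ) := by exact_mod_cast hm2
            linarith
          have h1 : F m ≤ (H * |2*H-1| * ((m:ℝ)-1)^(2*H-2)) ^ r :=
            pow_le_pow_left₀ (abs_nonneg _) hb r
          refine h1.trans_eq ?_
          rw [mul_pow, hcdef, ← Real.rpow_natCast (((m:ℝ)-1)^(2*H-2)) r,
            ← Real.rpow_mul hm1]
        calc ∑ m ∈ Finset.Ico 2 N, F m ≤ ∑ m ∈ Finset.Ico 2 N, c * ((m:ℝ)-1) ^ α :=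
              Finset.sum_le_sum hstep
          _ = c * ∑ m ∈ Finset.Ico 2 N, ((m:ℝ)-1) ^ α := by rw [Finset.mul_sum]
          _ ≤ c * T := by
              apply mul_le_mul_of_nonneg_left _ hc
              rw [Finset.sum_Ico_eq_sum_range]
              have : ∀ i : ℕ, (((2+i:ℕ):ℝ)-1) ^ α = ((i:ℝ)+1) ^ α := by
                intro i; congr 1; push_cast; ring
              rw [Finset.sum_congr rfl fun i _ => this i]
              exact Summable.sum_le_tsum _ (fun i _ => Real.rpow_nonneg (by positivity) _) hsum
      linarith
  refine ⟨2*B, fun n hn t ht => ?_⟩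
  set N : ℕ := ⌊(2:ℝ) ^ ((n:ℝ)/2) * t⌋₊ with hN
  -- inner sums
  have hInner : ∀ k ∈ Finset.range N,
      ∑ l ∈ Finset.range N, |rho H ((k:ℤ) - l)| ^ r ≤ 2*B := by
    intro k hk
    have hkN : k < N := Finset.mem_range.mp hk
    have hrw : ∀ l : ℕ, |rho H ((k:ℤ) - l)| ^ r = F (((k:ℤ) - l).natAbs) := by
      intro l; rw [hFdef]; simp only; rw [rho_natAbs]
    simp only [hrw]
    have hsplit : Finset.range N = Finset.Ico 0 (k+1) ∪ Finset.Ico (k+1) N := by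
      rw [Finset.range_eq_Ico, Finset.Ico_union_Ico_eq_Ico (by omega) (by omega)]
    rw [hsplit, Finset.sum_union (Finset.Ico_disjoint_Ico_consecutive 0 (k+1) N)]
    have h1 : ∑ l ∈ Finset.Ico 0 (k+1), F (((k:ℤ) - l).natAbs) ≤ B := by
      have : ∀ l ∈ Finset.Ico 0 (k+1), F (((k:ℤ) - l).natAbs) = F (k - l) := by
        intro l hl
        have hlk : l ≤ k := by have := (Finset.mem_Ico.mp hl).2; omega
        congr 1; omega
      rw [Finset.sum_congr rfl this]
      rw [show Finset.Ico 0 (k+1) = Finset.range (k+1) by rw [Finset.range_eq_Ico]]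
      rw [show (∑ l ∈ Finset.range (k+1), F (k - l))
          = ∑ l ∈ Finset.range (k+1), F (k + 1 - 1 - l) by
        apply Finset.sum_congr rfl; intro l _; congr 1]
      rw [Finset.sum_range_reflect F (k+1)]
      exact hPart (k+1)
    have h2 : ∑ l ∈ Finset.Ico (k+1) N, F (((k:ℤ) - l).natAbs) ≤ B := by
      rw [Finset.sum_Ico_eq_sum_range]
      have : ∀ i ∈ Finset.range (N - (k+1)), F (((k:ℤ) - ((k+1+i : ℕ):ℤ)).natAbs) = F (i+1) := by
        intro i _; congr 1
        have h3 : ((k:ℤ) - ((k+1+i : ℕ):ℤ)) = -((i:ℤ)+1) := by push_cast; ring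
        rw [h3]; simp; omega
      rw [Finset.sum_congr rfl this]
      calc ∑ i ∈ Finset.range (N-(k+1)), F (i+1)
          ≤ F 0 + ∑ i ∈ Finset.range (N-(k+1)), F (i+1) := by linarith [hFnn 0]
        _ = ∑ m ∈ Finset.range (N-(k+1)+1), F m := by
            rw [Finset.sum_range_succ']; ring
        _ ≤ B := hPart _
    linarith
  have hS : ∑ k ∈ Finset.range N, ∑ l ∈ Finset.range N, |rho H ((k:ℤ) - l)| ^ r
      ≤ (N:ℝ) * (2*B) := by
    calc ∑ k ∈ Finset.range N, ∑ l ∈ Finset.range N, |rho H ((k:ℤ) - l)| ^ r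
        ≤ ∑ _k ∈ Finset.range N, 2*B := Finset.sum_le_sum hInner
      _ = (N:ℝ) * (2*B) := by rw [Finset.sum_const, Finset.card_range]; simp [mul_comm]
  have hNle : (N:ℝ) ≤ (2:ℝ) ^ ((n:ℝ)/2) * t := Nat.floor_le (by positivity)
  have hpow : (0:ℝ) ≤ (2:ℝ) ^ (-(n:ℝ)*r*H) := Real.rpow_nonneg (by norm_num) _
  calc (2:ℝ) ^ (-(n:ℝ)*r*H) *
        ∑ k ∈ Finset.range N, ∑ l ∈ Finset.range N, |rho H ((k:ℤ) - l)| ^ r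
      ≤ (2:ℝ) ^ (-(n:ℝ)*r*H) * ((N:ℝ) * (2*B)) := mul_le_mul_of_nonneg_left hS hpow
    _ ≤ (2:ℝ) ^ (-(n:ℝ)*r*H) * (((2:ℝ) ^ ((n:ℝ)/2) * t) * (2*B)) := by
        apply mul_le_mul_of_nonneg_left _ hpow
        exact mul_le_mul_of_nonneg_right hNle (by linarith)
    _ = 2*B * t * ((2:ℝ) ^ (-(n:ℝ)*r*H) * (2:ℝ) ^ ((n:ℝ)/2)) := by ring
    _ = 2*B * t * (2:ℝ) ^ ((n:ℝ) * (1/2 - r*H)) := by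
        rw [← Real.rpow_add (by norm_num : (0:ℝ) < 2)]
        congr 1; ring
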